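/- Let n ≥ 1, f ∈ L²(ℂ^n) and k ∈ ℤ_+. Then the spectral projection z ↦ f×φ_k^{n−1}(z) = ∫_{ℂ^n} f(z−w) φ_k^{n−1}(w) e^{(i/2) Im(z·w̄)} dw is a real analytic function on ℂ^n ≅ ℝ^{2n}. -/

import Mathlib

open MeasureTheory Metric Complex
open scoped ENNReal ComplexConjugate BigOperators

noncomputable instance (n : ℕ) : MeasurableSpace (EuclideanSpace ℂ (Fin n)) := borel _
instance (n : ℕ) : BorelSpace (EuclideanSpace ℂ (Fin n)) := ⟨rfl⟩

/-- Laguerre polynomial `L_k^α(x) = ∑_{j=0}^k C(k+α, k-j) (-x)^j / j!`. -/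
noncomputable def laguerreL (k α : ℕ) (x : ℝ) : ℝ :=
  ∑ j ∈ Finset.range (k + 1), ((k + α).choose (k - j) : ℝ) * (-x) ^ j / (j.factorial : ℝ)

/-- Laguerre function `φ_k^{n-1}(z) = L_k^{n-1}(|z|²/2) e^{-|z|²/4}` on `ℂ^n`. -/
noncomputable def laguerrePhi (n k : ℕ) (z : EuclideanSpace ℂ (Fin n)) : ℂ :=
  ((laguerreL k (n - 1) (‖z‖ ^ 2 / 2) * Real.exp (-‖z‖ ^ 2 / 4) : ℝ) : ℂ)

/-- Spectral projection `f × φ_k^{n-1}(z) = ∫_{ℂ^n} f(z-w) φ_k^{n-1}(w) e^{(i/2) Im(z·w̄)} dw`. -/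
noncomputable def specProj (n k : ℕ) (f : EuclideanSpace ℂ (Fin n) → ℂ)
    (z : EuclideanSpace ℂ (Fin n)) : ℂ :=
  ∫ w, f (z - w) * laguerrePhi n k w *
    Complex.exp ((Complex.I / 2) * (((∑ j, z j * conj (w j)).im : ℝ) : ℂ)) ∂volume

/-!
After the substitution `u = z - w` and the expansion `|z - u|² = |z|² + |u|² - 2 Re⟪u, z⟫`, the
integrand becomes a finite sum of terms `c(z) · g(u) · (Re⟪u, z⟫)^b · exp(⟪z, u⟫ / 2)`, where `c` is
a real-analytic function of `|z|²` and `g(u) = f(u) · (polynomial in |u|²) · exp(-|u|²/4)`.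
By Cauchy–Schwarz against a Gaussian, such a `g` has all exponential moments
`∫ |g(u)| exp(r |u|) du < ∞`. For such `g`, the integral of a power of one linear form in `z` times
the exponential of another one is an entire function of `z`: expanding the exponential and
integrating term by term gives a power series whose coefficients are bounded by the moments.
-/

open scoped Nat InnerProductSpace

theorem pow_mul_pow_div_factorial_le {t : ℝ} (ht : 0 ≤ t) (b m : ℕ) :
    t ^ b * (t ^ m / m !) ≤ b ! * 2⁻¹ ^ m * Real.exp (3 * t) := by
  have hb : t ^ b ≤ b ! * Real.exp t := by
    have := Real.pow_div_factorial_le_exp _ ht b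
    rwa [div_le_iff₀ (by positivity), mul_comm] at this
  have hm : t ^ m / m ! ≤ 2⁻¹ ^ m * Real.exp (2 * t) := by
    have := Real.pow_div_factorial_le_exp _ (by positivity : 0 ≤ 2 * t) m
    calc t ^ m / m ! = 2⁻¹ ^ m * ((2 * t) ^ m / m !) := by
          rw [mul_pow, ← mul_div_assoc, ← mul_assoc, ← mul_pow]; norm_num
      _ ≤ 2⁻¹ ^ m * Real.exp (2 * t) := by gcongr
  calc t ^ b * (t ^ m / m !) ≤ (b ! * Real.exp t) * (2⁻¹ ^ m * Real.exp (2 * t)) := by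
        gcongr
    _ = b ! * 2⁻¹ ^ m * Real.exp (3 * t) := by
        rw [show 3 * t = t + 2 * t by ring, Real.exp_add]; ring

section PowMulExp

variable {E : Type*} [NormedAddCommGroup E] [NormedSpace ℝ E]

noncomputable def powMulPowMultilinear (b N : ℕ) (x y : E →L[ℝ] ℂ) :
    ContinuousMultilinearMap ℝ (fun _ : Fin N => E) ℂ :=
  (ContinuousMultilinearMap.mkPiAlgebraFin ℝ N ℂ).compContinuousLinearMap
    fun i => if (i : ℕ) < b then x else y

theorem powMulPowMultilinear_apply_const {b N : ℕ} (hbN : b ≤ N) (x y : E →L[ℝ] ℂ) (z : E) :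
    powMulPowMultilinear b N x y (fun _ => z) = x z ^ b * y z ^ (N - b) := by
  simp only [powMulPowMultilinear, ContinuousMultilinearMap.compContinuousLinearMap_apply,
    ContinuousMultilinearMap.mkPiAlgebraFin_apply, List.prod_ofFn,
    apply_ite (fun L : E →L[ℝ] ℂ => L z)]
  rw [Fin.prod_univ_eq_prod_range (fun i => if i < b then x z else y z), Finset.prod_ite,
    Finset.prod_const, Finset.prod_const]
  simp only [Finset.range_eq_Ico, Finset.Ico_filter_lt, not_lt, Finset.Ico_filter_le, Nat.card_Ico]
  simp [hbN]

theorem norm_powMulPowMultilinear_le {b N : ℕ} {x y : E →L[ℝ] ℂ} {r : ℝ} (hx : ‖x‖ ≤ r)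
    (hy : ‖y‖ ≤ r) : ‖powMulPowMultilinear b N x y‖ ≤ r ^ N := by
  refine (ContinuousMultilinearMap.norm_compContinuousLinearMap_le _ _).trans ?_
  rw [ContinuousMultilinearMap.norm_mkPiAlgebraFin, one_mul]
  calc ∏ i : Fin N, ‖if (i : ℕ) < b then x else y‖ ≤ ∏ _i : Fin N, r :=
        Finset.prod_le_prod (fun _ _ => norm_nonneg _) fun i _ => by split_ifs <;> assumption
    _ = r ^ N := by simp

theorem continuous_powMulPowMultilinear (b N : ℕ) :
    Continuous fun p : (E →L[ℝ] ℂ) × (E →L[ℝ] ℂ) => powMulPowMultilinear b N p.1 p.2 :=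
  (ContinuousMultilinearMap.compContinuousLinearMapLRight
    (ContinuousMultilinearMap.mkPiAlgebraFin ℝ N ℂ)).cont.comp <|
      continuous_pi fun i => by split_ifs; exacts [continuous_fst, continuous_snd]

theorem norm_powMulPowMultilinear_mul_pow_div_le {b N : ℕ} (hbN : b ≤ N) {x y : E →L[ℝ] ℂ}
    {R r : ℝ} (hx : ‖x‖ ≤ R) (hy : ‖y‖ ≤ R) (hr : 0 ≤ r) :
    ‖powMulPowMultilinear b N x y‖ * r ^ N / (N - b)! ≤
      b ! * 2⁻¹ ^ (N - b) * Real.exp (3 * r * R) := by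
  have hR : 0 ≤ R := (norm_nonneg x).trans hx
  calc ‖powMulPowMultilinear b N x y‖ * r ^ N / (N - b)! ≤ R ^ N * r ^ N / (N - b)! := by
        gcongr; exact norm_powMulPowMultilinear_le hx hy
    _ = (r * R) ^ b * ((r * R) ^ (N - b) / (N - b)!) := by
        rw [mul_div_assoc', ← pow_add, Nat.add_sub_cancel' hbN, mul_pow, mul_comm]
    _ ≤ b ! * 2⁻¹ ^ (N - b) * Real.exp (3 * r * R) := by
        rw [mul_assoc 3]; exact pow_mul_pow_div_factorial_le (by positivity) b (N - b)

theorem norm_apply_pow_mul_apply_pow_div_le {x y : E →L[ℝ] ℂ} {R : ℝ} (hx : ‖x‖ ≤ R)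
    (hy : ‖y‖ ≤ R) (z : E) (b m : ℕ) :
    ‖x z ^ b * (y z ^ m / m !)‖ ≤ b ! * 2⁻¹ ^ m * Real.exp (3 * ‖z‖ * R) := by
  have hbN := Nat.le_add_left b m
  have hΦ := norm_powMulPowMultilinear_mul_pow_div_le hbN hx hy (norm_nonneg z)
  have hz : ‖x z ^ b * y z ^ m‖ ≤ ‖powMulPowMultilinear b (m + b) x y‖ * ‖z‖ ^ (m + b) := by
    simpa [powMulPowMultilinear_apply_const hbN] using
      (powMulPowMultilinear b (m + b) x y).le_opNorm fun _ => z
  rw [Nat.add_sub_cancel] at hΦ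
  calc ‖x z ^ b * (y z ^ m / m !)‖ = ‖x z ^ b * y z ^ m‖ / m ! := by
        rw [← mul_div_assoc, norm_div, Complex.norm_natCast]
    _ ≤ b ! * 2⁻¹ ^ m * Real.exp (3 * ‖z‖ * R) :=
        (div_le_div_of_nonneg_right hz (by positivity)).trans hΦ

end PowMulExp

section PowMulExpSeries

variable {α E : Type*} [MeasurableSpace α] [NormedAddCommGroup E] [NormedSpace ℝ E]

def HasExpMoments (μ : Measure α) (g : α → ℂ) (M : α → ℝ) : Prop :=
  AEStronglyMeasurable g μ ∧ ∀ r : ℝ, Integrable (fun u => ‖g u‖ * Real.exp (r * M u)) μ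

noncomputable def powMulExpSeries (μ : Measure α) (g : α → ℂ) (β ℓ : α → E →L[ℝ] ℂ) (b : ℕ) :
    FormalMultilinearSeries ℝ E ℂ := fun N =>
  if b ≤ N then ((N - b)! : ℝ)⁻¹ • ∫ u, g u • powMulPowMultilinear b N (β u) (ℓ u) ∂μ else 0

variable {μ : Measure α} {g : α → ℂ} {β ℓ : α → E →L[ℝ] ℂ} {M : α → ℝ}

theorem HasExpMoments.integrable_smul_powMulPowMultilinear (hg : HasExpMoments μ g M)
    (hβ : AEStronglyMeasurable β μ) (hℓ : AEStronglyMeasurable ℓ μ) (hβM : ∀ u, ‖β u‖ ≤ M u)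
    (hℓM : ∀ u, ‖ℓ u‖ ≤ M u) (b N : ℕ) :
    Integrable (fun u => g u • powMulPowMultilinear b N (β u) (ℓ u)) μ := by
  have hΦ : AEStronglyMeasurable (fun u => powMulPowMultilinear b N (β u) (ℓ u)) μ :=
    (continuous_powMulPowMultilinear b N).comp_aestronglyMeasurable (f := fun u => (β u, ℓ u))
      (hβ.prodMk hℓ)
  refine ((hg.2 3).const_mul (N ! : ℝ)).mono' (hg.1.smul hΦ) (ae_of_all _ fun u => ?_)
  have hM : 0 ≤ M u := (norm_nonneg _).trans (hβM u)
  calc ‖g u • powMulPowMultilinear b N (β u) (ℓ u)‖ ≤ ‖g u‖ * M u ^ N := by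
        rw [norm_smul (g u) (powMulPowMultilinear b N (β u) (ℓ u))]
        gcongr
        exact norm_powMulPowMultilinear_le (hβM u) (hℓM u)
    _ ≤ ‖g u‖ * (N ! * Real.exp (3 * M u)) := by
        gcongr
        simpa using pow_mul_pow_div_factorial_le hM N 0
    _ = N ! * (‖g u‖ * Real.exp (3 * M u)) := by ring

theorem powMulExpSeries_apply_const (hg : HasExpMoments μ g M) (hβ : AEStronglyMeasurable β μ)
    (hℓ : AEStronglyMeasurable ℓ μ) (hβM : ∀ u, ‖β u‖ ≤ M u) (hℓM : ∀ u, ‖ℓ u‖ ≤ M u)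
    (b m : ℕ) (z : E) :
    powMulExpSeries μ g β ℓ b (m + b) (fun _ => z) =
      ∫ u, g u * (β u z ^ b * (ℓ u z ^ m / m !)) ∂μ := by
  have hint := hg.integrable_smul_powMulPowMultilinear hβ hℓ hβM hℓM b (m + b)
  have heval : (∫ u, g u • powMulPowMultilinear b (m + b) (β u) (ℓ u) ∂μ) (fun _ => z) =
      ∫ u, g u * powMulPowMultilinear b (m + b) (β u) (ℓ u) (fun _ => z) ∂μ :=
    ((ContinuousMultilinearMap.apply ℝ _ ℂ fun _ => z).integral_comp_comm hint).symm
  rw [powMulExpSeries, if_pos (Nat.le_add_left b m), Nat.add_sub_cancel, smul_apply, heval,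
    ← integral_smul]
  refine integral_congr_ae (ae_of_all _ fun u => ?_)
  simp only [powMulPowMultilinear_apply_const (Nat.le_add_left b m), Nat.add_sub_cancel,
    Complex.real_smul]
  push_cast
  ring

theorem norm_powMulExpSeries_mul_pow_le (hg : HasExpMoments μ g M) (hβM : ∀ u, ‖β u‖ ≤ M u)
    (hℓM : ∀ u, ‖ℓ u‖ ≤ M u) (b N : ℕ) {r : ℝ} (hr : 0 ≤ r) :
    ‖powMulExpSeries μ g β ℓ b N‖ * r ^ N ≤ b ! * ∫ u, ‖g u‖ * Real.exp (3 * r * M u) ∂μ := by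
  have hint : 0 ≤ ∫ u, ‖g u‖ * Real.exp (3 * r * M u) ∂μ := integral_nonneg fun _ => by positivity
  unfold powMulExpSeries
  split_ifs with hbN
  swap
  · rw [norm_zero, zero_mul]; positivity
  rw [← integral_const_mul, norm_smul, norm_inv, Real.norm_natCast]
  calc ((N - b)! : ℝ)⁻¹ * ‖∫ u, g u • powMulPowMultilinear b N (β u) (ℓ u) ∂μ‖ * r ^ N
      ≤ ((N - b)! : ℝ)⁻¹ * (∫ u, ‖g u • powMulPowMultilinear b N (β u) (ℓ u)‖ ∂μ) * r ^ N := by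
        gcongr; exact norm_integral_le_integral_norm _
    _ = ∫ u, ‖g u • powMulPowMultilinear b N (β u) (ℓ u)‖ * r ^ N / (N - b)! ∂μ := by
        rw [← integral_const_mul, ← integral_mul_const]
        congr 1; ext u; ring
    _ ≤ ∫ u, b ! * (‖g u‖ * Real.exp (3 * r * M u)) ∂μ := by
        refine integral_mono_of_nonneg (ae_of_all _ fun u => by positivity)
          ((hg.2 _).const_mul _) (ae_of_all _ fun u => ?_)
        calc ‖g u • powMulPowMultilinear b N (β u) (ℓ u)‖ * r ^ N / (N - b)!
            ≤ ‖g u‖ * (‖powMulPowMultilinear b N (β u) (ℓ u)‖ * r ^ N / (N - b)!) := by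
              rw [norm_smul, mul_assoc, mul_div_assoc, mul_div_assoc]
          _ ≤ ‖g u‖ * (b ! * 2⁻¹ ^ (N - b) * Real.exp (3 * r * M u)) := by
              gcongr; exact norm_powMulPowMultilinear_mul_pow_div_le hbN (hβM u) (hℓM u) hr
          _ ≤ ‖g u‖ * (b ! * 1 * Real.exp (3 * r * M u)) := by
              gcongr; exact pow_le_one₀ (by norm_num) (by norm_num)
          _ = b ! * (‖g u‖ * Real.exp (3 * r * M u)) := by ring

theorem HasExpMoments.integrable_mul_pow_mul_exp (hg : HasExpMoments μ g M)
    (hβ : AEStronglyMeasurable β μ) (hℓ : AEStronglyMeasurable ℓ μ) (hβM : ∀ u, ‖β u‖ ≤ M u)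
    (hℓM : ∀ u, ‖ℓ u‖ ≤ M u) (b : ℕ) (z : E) :
    Integrable (fun u => g u * β u z ^ b * Complex.exp (ℓ u z)) μ := by
  have hcont : Continuous fun p : (E →L[ℝ] ℂ) × (E →L[ℝ] ℂ) => p.1 z ^ b * Complex.exp (p.2 z) := by
    fun_prop
  refine ((hg.2 (4 * ‖z‖)).const_mul (b ! : ℝ)).mono'
    ((hg.1.mul (hcont.comp_aestronglyMeasurable (f := fun u => (β u, ℓ u)) (hβ.prodMk hℓ))).congr
      (ae_of_all _ fun u => (mul_assoc _ _ _).symm)) (ae_of_all _ fun u => ?_)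
  have hpow : ‖β u z ^ b‖ ≤ b ! * Real.exp (3 * ‖z‖ * M u) := by
    simpa using norm_apply_pow_mul_apply_pow_div_le (hβM u) (hℓM u) z b 0
  have hexp : ‖Complex.exp (ℓ u z)‖ ≤ Real.exp (‖z‖ * M u) := by
    rw [Complex.norm_exp, Real.exp_le_exp]
    exact (re_le_norm _).trans ((ℓ u).le_of_opNorm_le (hℓM u) z |>.trans_eq (mul_comm _ _))
  calc ‖g u * β u z ^ b * Complex.exp (ℓ u z)‖
      ≤ ‖g u‖ * (b ! * Real.exp (3 * ‖z‖ * M u)) * Real.exp (‖z‖ * M u) := by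
        rw [norm_mul, norm_mul]; gcongr
    _ = b ! * (‖g u‖ * Real.exp (4 * ‖z‖ * M u)) := by
        rw [show 4 * ‖z‖ * M u = 3 * ‖z‖ * M u + ‖z‖ * M u by ring, Real.exp_add]; ring

theorem hasSum_powMulExpSeries (hg : HasExpMoments μ g M) (hβ : AEStronglyMeasurable β μ)
    (hℓ : AEStronglyMeasurable ℓ μ) (hβM : ∀ u, ‖β u‖ ≤ M u) (hℓM : ∀ u, ‖ℓ u‖ ≤ M u)
    (b : ℕ) (z : E) :
    HasSum (fun N => powMulExpSeries μ g β ℓ b N fun _ => z)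
      (∫ u, g u * β u z ^ b * Complex.exp (ℓ u z) ∂μ) := by
  set F : ℕ → α → ℂ := fun m u => g u * (β u z ^ b * (ℓ u z ^ m / m !))
  set C := ∫ u, ‖g u‖ * Real.exp (3 * ‖z‖ * M u) ∂μ
  have hF_le (m : ℕ) (u : α) :
      ‖F m u‖ ≤ b ! * 2⁻¹ ^ m * (‖g u‖ * Real.exp (3 * ‖z‖ * M u)) := by
    calc ‖F m u‖ = ‖g u‖ * ‖β u z ^ b * (ℓ u z ^ m / m !)‖ := norm_mul _ _
      _ ≤ ‖g u‖ * (b ! * 2⁻¹ ^ m * Real.exp (3 * ‖z‖ * M u)) := by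
          gcongr; exact norm_apply_pow_mul_apply_pow_div_le (hβM u) (hℓM u) z b m
      _ = _ := by ring
  have hF_int (m : ℕ) : Integrable (F m) μ := by
    have hcont : Continuous fun p : (E →L[ℝ] ℂ) × (E →L[ℝ] ℂ) => p.1 z ^ b * (p.2 z ^ m / m !) := by
      fun_prop
    refine ((hg.2 _).const_mul _).mono'
      (hg.1.mul (hcont.comp_aestronglyMeasurable (f := fun u => (β u, ℓ u)) (hβ.prodMk hℓ)))
      (ae_of_all _ (hF_le m))
  have hF_sum : Summable fun m => ∫ u, ‖F m u‖ ∂μ := by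
    have hgeom := summable_geometric_of_lt_one (by norm_num) (by norm_num : (2 : ℝ)⁻¹ < 1)
    refine Summable.of_nonneg_of_le (fun m => integral_nonneg fun u => norm_nonneg _)
      (fun m => ?_) ((hgeom.mul_left (b ! : ℝ)).mul_right C)
    rw [← integral_const_mul]
    exact integral_mono_of_nonneg (ae_of_all _ fun u => norm_nonneg _)
      ((hg.2 _).const_mul _) (ae_of_all _ fun u => hF_le m u)
  have hF_tsum (u : α) : ∑' m, F m u = g u * β u z ^ b * Complex.exp (ℓ u z) := by
    rw [Complex.exp_eq_exp_ℂ, mul_assoc]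
    exact ((NormedSpace.expSeries_div_hasSum_exp (ℓ u z)).mul_left _ |>.mul_left _).tsum_eq
  have hzero : ∑ N ∈ Finset.range b, powMulExpSeries μ g β ℓ b N (fun _ => z) = 0 :=
    Finset.sum_eq_zero fun N hN => by
      simp [powMulExpSeries, not_le.2 (Finset.mem_range.1 hN)]
  rw [← hasSum_nat_add_iff' b, hzero, sub_zero]
  simp only [powMulExpSeries_apply_const hg hβ hℓ hβM hℓM]
  simpa only [hF_tsum] using hasSum_integral_of_summable_integral_norm hF_int hF_sum

theorem hasFPowerSeriesOnBall_powMulExpSeries (hg : HasExpMoments μ g M)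
    (hβ : AEStronglyMeasurable β μ) (hℓ : AEStronglyMeasurable ℓ μ) (hβM : ∀ u, ‖β u‖ ≤ M u)
    (hℓM : ∀ u, ‖ℓ u‖ ≤ M u) (b : ℕ) :
    HasFPowerSeriesOnBall (fun z => ∫ u, g u * β u z ^ b * Complex.exp (ℓ u z) ∂μ)
      (powMulExpSeries μ g β ℓ b) 0 ⊤ where
  r_le := (ENNReal.eq_top_of_forall_nnreal_le fun r =>
    (powMulExpSeries μ g β ℓ b).le_radius_of_bound _ fun N =>
      norm_powMulExpSeries_mul_pow_le hg hβM hℓM b N r.2).ge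
  r_pos := ENNReal.zero_lt_top
  hasSum {z} _ := by simpa using hasSum_powMulExpSeries hg hβ hℓ hβM hℓM b z

theorem analyticAt_integral_mul_pow_mul_exp (hg : HasExpMoments μ g M)
    (hβ : AEStronglyMeasurable β μ) (hℓ : AEStronglyMeasurable ℓ μ) (hβM : ∀ u, ‖β u‖ ≤ M u)
    (hℓM : ∀ u, ‖ℓ u‖ ≤ M u) (b : ℕ) (z : E) :
    AnalyticAt ℝ (fun z => ∫ u, g u * β u z ^ b * Complex.exp (ℓ u z) ∂μ) z :=
  (hasFPowerSeriesOnBall_powMulExpSeries hg hβ hℓ hβM hℓM b).analyticAt_of_mem (by simp)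

end PowMulExpSeries

section Gaussian

variable {V : Type*} [NormedAddCommGroup V] [InnerProductSpace ℝ V]

theorem analyticAt_norm_sq (x : V) : AnalyticAt ℝ (fun z : V => ‖z‖ ^ 2) x := by
  have hdiag : AnalyticAt ℝ (fun z : V => (z, z)) x := analyticAt_id.prod analyticAt_id
  refine (((innerSL ℝ (E := V)).analyticAt_bilinear (x, x)).comp_of_eq hdiag rfl).congr
    (Filter.Eventually.of_forall fun z => ?_)
  exact real_inner_self_eq_norm_sq z

variable [FiniteDimensional ℝ V] [MeasurableSpace V] [BorelSpace V]

theorem integrable_exp_neg_mul_sq_norm {c : ℝ} (hc : 0 < c) :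
    Integrable fun v : V => Real.exp (-c * ‖v‖ ^ 2) := by
  simpa [Complex.norm_exp, ← Complex.ofReal_pow] using
    (GaussianFourier.integrable_cexp_neg_mul_sq_norm_add (V := V) (b := c)
      (by simpa using hc) 0 0).norm

theorem memLp_two_exp_neg_mul_sq_norm {c : ℝ} (hc : 0 < c) :
    MemLp (fun v : V => Real.exp (-c * ‖v‖ ^ 2)) 2 := by
  refine (memLp_two_iff_integrable_sq (by fun_prop)).2 ?_
  simpa [← Real.exp_nat_mul, ← mul_assoc] using
    integrable_exp_neg_mul_sq_norm (V := V) (c := 2 * c) (by positivity)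

end Gaussian

theorem pow_mul_exp_le_exp_neg_sq (x r : ℝ) (m : ℕ) :
    (x ^ 2 / 2) ^ m * Real.exp (-x ^ 2 / 4) * Real.exp (r * x) ≤
      4 ^ m * m ! * Real.exp (4 * r ^ 2) * Real.exp (-(1 / 16) * x ^ 2) := by
  have hpow : (x ^ 2 / 2) ^ m ≤ 4 ^ m * m ! * Real.exp (x ^ 2 / 8) := by
    have := Real.pow_div_factorial_le_exp _ (by positivity : 0 ≤ x ^ 2 / 8) m
    calc (x ^ 2 / 2) ^ m = 4 ^ m * m ! * ((x ^ 2 / 8) ^ m / m !) := by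
          field_simp; rw [← mul_pow]; ring
      _ ≤ 4 ^ m * m ! * Real.exp (x ^ 2 / 8) := by gcongr
  calc (x ^ 2 / 2) ^ m * Real.exp (-x ^ 2 / 4) * Real.exp (r * x)
      ≤ 4 ^ m * m ! * Real.exp (x ^ 2 / 8) * Real.exp (-x ^ 2 / 4) * Real.exp (r * x) := by
        gcongr
    _ = 4 ^ m * m ! * Real.exp (x ^ 2 / 8 + -x ^ 2 / 4 + r * x) := by
        rw [Real.exp_add, Real.exp_add]; ring
    _ ≤ 4 ^ m * m ! * Real.exp (4 * r ^ 2 + -(1 / 16) * x ^ 2) := by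
        gcongr 4 ^ m * m ! * Real.exp ?_
        nlinarith [sq_nonneg (x / 4 - 2 * r)]
    _ = 4 ^ m * m ! * Real.exp (4 * r ^ 2) * Real.exp (-(1 / 16) * x ^ 2) := by
        rw [Real.exp_add]; ring

section LaguerreWeight

variable {V : Type*} [NormedAddCommGroup V] [InnerProductSpace ℝ V] [FiniteDimensional ℝ V]
  [MeasurableSpace V] [BorelSpace V]

noncomputable def laguerreWeight (f : V → ℂ) (m : ℕ) (u : V) : ℂ :=
  f u * (((-(‖u‖ ^ 2 / 2)) ^ m * Real.exp (-‖u‖ ^ 2 / 4) : ℝ) : ℂ)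

theorem hasExpMoments_laguerreWeight {f : V → ℂ} (hf : MemLp f 2) (m : ℕ) :
    HasExpMoments volume (laguerreWeight f m) (‖·‖) := by
  refine ⟨hf.1.mul (by fun_prop : Continuous _).aestronglyMeasurable, fun r => ?_⟩
  set w : V → ℝ := fun u => (‖u‖ ^ 2 / 2) ^ m * Real.exp (-‖u‖ ^ 2 / 4) * Real.exp (r * ‖u‖)
  have hw : MemLp w 2 :=
    ((memLp_two_exp_neg_mul_sq_norm (V := V) (by norm_num : (0 : ℝ) < 1 / 16)).const_mul
      (4 ^ m * m ! * Real.exp (4 * r ^ 2))).of_le (by fun_prop) <| ae_of_all _ fun u => by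
        simp only [Real.norm_eq_abs, w]
        rw [abs_of_nonneg (by positivity), abs_of_nonneg (by positivity)]
        exact pow_mul_exp_le_exp_neg_sq ‖u‖ r m
  refine (hf.norm.integrable_mul hw).congr (ae_of_all _ fun u => ?_)
  simp only [Pi.mul_apply, laguerreWeight, w, norm_mul, Complex.norm_real, Real.norm_eq_abs,
    abs_pow, abs_neg, abs_of_nonneg (by positivity : 0 ≤ ‖u‖ ^ 2 / 2),
    Real.abs_exp]
  ring

end LaguerreWeight

section InnerCLM

variable {V : Type*} [NormedAddCommGroup V] [InnerProductSpace ℂ V]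

noncomputable def reInnerCLM (u : V) : V →L[ℝ] ℂ :=
  (ofRealCLM ∘L reCLM) ∘L (innerSL ℂ u).restrictScalars ℝ

noncomputable def halfInnerCLM (u : V) : V →L[ℝ] ℂ :=
  ((2⁻¹ : ℝ) • conjCLE.toContinuousLinearMap) ∘L (innerSL ℂ u).restrictScalars ℝ

theorem reInnerCLM_apply (u z : V) : reInnerCLM u z = ((⟪u, z⟫_ℂ).re : ℂ) := rfl

theorem halfInnerCLM_apply (u z : V) : halfInnerCLM u z = ⟪z, u⟫_ℂ / 2 := by
  simp [halfInnerCLM, Complex.real_smul, div_eq_inv_mul]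

theorem norm_reInnerCLM_le (u : V) : ‖reInnerCLM u‖ ≤ ‖u‖ :=
  ContinuousLinearMap.opNorm_le_bound _ (norm_nonneg u) fun z => by
    simpa [reInnerCLM_apply] using (abs_re_le_norm _).trans (norm_inner_le_norm u z)

theorem norm_halfInnerCLM_le (u : V) : ‖halfInnerCLM u‖ ≤ ‖u‖ :=
  ContinuousLinearMap.opNorm_le_bound _ (norm_nonneg u) fun z => by
    rw [halfInnerCLM_apply, norm_div, RCLike.norm_ofNat, mul_comm]
    linarith [norm_inner_le_norm (𝕜 := ℂ) z u, mul_nonneg (norm_nonneg z) (norm_nonneg u)]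

theorem continuous_restrictScalars_innerSL :
    Continuous fun u : V => (innerSL ℂ u).restrictScalars ℝ :=
  (ContinuousLinearMap.restrictScalarsL ℂ V ℂ ℝ ℝ).continuous.comp (innerSL ℂ).continuous

theorem continuous_reInnerCLM : Continuous (reInnerCLM (V := V)) :=
  continuous_const.clm_comp continuous_restrictScalars_innerSL

theorem continuous_halfInnerCLM : Continuous (halfInnerCLM (V := V)) :=
  continuous_const.clm_comp continuous_restrictScalars_innerSL

end InnerCLM

noncomputable def laguerreCoeff (k α j a b : ℕ) : ℝ :=
  (k + α).choose (k - j) / j ! * j.choose a * (j - a).choose b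

theorem laguerreL_add_sub (k α : ℕ) (X Y W : ℝ) :
    laguerreL k α (X + Y - W) =
      ∑ j ∈ Finset.range (k + 1), ∑ a ∈ Finset.range (j + 1), ∑ b ∈ Finset.range (j - a + 1),
        laguerreCoeff k α j a b * (-X) ^ a * (-Y) ^ (j - a - b) * W ^ b := by
  unfold laguerreL
  refine Finset.sum_congr rfl fun j _ => ?_
  rw [show -(X + Y - W) = -X + (W + -Y) by ring, add_pow]
  simp only [add_pow W, Finset.mul_sum, Finset.sum_mul, Finset.sum_div]
  refine Finset.sum_congr rfl fun a _ => Finset.sum_congr rfl fun b _ => ?_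
  rw [laguerreCoeff, Nat.sub_sub]
  ring

section SpecProj

variable {n : ℕ}

local notation "ℂⁿ" => EuclideanSpace ℂ (Fin n)

theorem sum_mul_conj_eq_inner (z w : ℂⁿ) : ∑ j, z j * conj (w j) = ⟪w, z⟫_ℂ := by
  simp [PiLp.inner_apply]

theorem laguerrePhi_sub_mul_exp (k : ℕ) (z u : ℂⁿ) :
    laguerrePhi n k (z - u) * Complex.exp (I / 2 * ((∑ j, z j * conj ((z - u) j)).im : ℂ)) =
      ((laguerreL k (n - 1) (‖z‖ ^ 2 / 2 + ‖u‖ ^ 2 / 2 - (⟪u, z⟫_ℂ).re) *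
          Real.exp (-‖z‖ ^ 2 / 4) * Real.exp (-‖u‖ ^ 2 / 4) : ℝ) : ℂ) *
        Complex.exp (halfInnerCLM u z) := by
  have hnorm : ‖z - u‖ ^ 2 = ‖z‖ ^ 2 + ‖u‖ ^ 2 - 2 * (⟪u, z⟫_ℂ).re := by
    rw [@norm_sub_sq ℂ, inner_re_symm, RCLike.re_to_complex]; ring
  have hphase : (∑ j, z j * conj ((z - u) j)).im = -(⟪u, z⟫_ℂ).im := by
    rw [sum_mul_conj_eq_inner, inner_sub_left, inner_self_eq_norm_sq_to_K]
    simp [← ofReal_pow]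
  rw [laguerrePhi, hphase, hnorm, halfInnerCLM_apply, ← inner_conj_symm z u]
  set s := ⟪u, z⟫_ℂ
  have hexp : ((Real.exp (-(‖z‖ ^ 2 + ‖u‖ ^ 2 - 2 * s.re) / 4) : ℝ) : ℂ) *
      Complex.exp (I / 2 * ((-s.im : ℝ) : ℂ)) =
      ((Real.exp (-‖z‖ ^ 2 / 4) * Real.exp (-‖u‖ ^ 2 / 4) : ℝ) : ℂ) * Complex.exp (conj s / 2) := by
    push_cast
    simp only [← Complex.exp_add]
    congr 1
    apply Complex.ext <;> simp <;> ring
  rw [show ‖z‖ ^ 2 / 2 + ‖u‖ ^ 2 / 2 - s.re = (‖z‖ ^ 2 + ‖u‖ ^ 2 - 2 * s.re) / 2 by ring,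
    ofReal_mul, mul_assoc, hexp]
  push_cast; ring

theorem mul_laguerrePhi_sub_mul_exp_eq_sum (k : ℕ) (f : ℂⁿ → ℂ) (z u : ℂⁿ) :
    f u * laguerrePhi n k (z - u) * Complex.exp (I / 2 * ((∑ j, z j * conj ((z - u) j)).im : ℂ)) =
      ∑ j ∈ Finset.range (k + 1), ∑ a ∈ Finset.range (j + 1), ∑ b ∈ Finset.range (j - a + 1),
        ((laguerreCoeff k (n - 1) j a b * (-(‖z‖ ^ 2 / 2)) ^ a * Real.exp (-‖z‖ ^ 2 / 4) : ℝ) : ℂ) *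
          (laguerreWeight f (j - a - b) u * reInnerCLM u z ^ b *
            Complex.exp (halfInnerCLM u z)) := by
  rw [mul_assoc, laguerrePhi_sub_mul_exp, laguerreL_add_sub]
  simp only [Finset.sum_mul, Finset.mul_sum, ofReal_sum]
  refine Finset.sum_congr rfl fun j _ => Finset.sum_congr rfl fun a _ =>
    Finset.sum_congr rfl fun b _ => ?_
  simp only [laguerreWeight, reInnerCLM_apply]
  push_cast
  ring

theorem specProj_eq_sum (k : ℕ) {f : ℂⁿ → ℂ} (hf : MemLp f 2) (z : ℂⁿ) :
    specProj n k f z =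
      ∑ j ∈ Finset.range (k + 1), ∑ a ∈ Finset.range (j + 1), ∑ b ∈ Finset.range (j - a + 1),
        ((laguerreCoeff k (n - 1) j a b * (-(‖z‖ ^ 2 / 2)) ^ a * Real.exp (-‖z‖ ^ 2 / 4) : ℝ) : ℂ) *
          ∫ u, laguerreWeight f (j - a - b) u * reInnerCLM u z ^ b *
            Complex.exp (halfInnerCLM u z) := by
  have hint (m b : ℕ) : Integrable fun u =>
      laguerreWeight f m u * reInnerCLM u z ^ b * Complex.exp (halfInnerCLM u z) :=
    (hasExpMoments_laguerreWeight hf m).integrable_mul_pow_mul_exp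
      continuous_reInnerCLM.aestronglyMeasurable continuous_halfInnerCLM.aestronglyMeasurable
      norm_reInnerCLM_le norm_halfInnerCLM_le b z
  rw [specProj, ← integral_sub_left_eq_self _ _ z]
  simp only [sub_sub_cancel, mul_laguerrePhi_sub_mul_exp_eq_sum]
  rw [integral_finsetSum _ fun j _ => integrable_finsetSum _ fun a _ =>
    integrable_finsetSum _ fun b _ => (hint _ b).const_mul _]
  refine Finset.sum_congr rfl fun j _ => ?_
  rw [integral_finsetSum _ fun a _ => integrable_finsetSum _ fun b _ => (hint _ b).const_mul _]
  refine Finset.sum_congr rfl fun a _ => ?_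
  rw [integral_finsetSum _ fun b _ => (hint _ b).const_mul _]
  exact Finset.sum_congr rfl fun b _ => integral_const_mul _ _

end SpecProj

theorem specProj_analytic_general
    (n k : ℕ) (f : EuclideanSpace ℂ (Fin n) → ℂ) (hf : MemLp f 2 volume) :
    ∀ z : EuclideanSpace ℂ (Fin n), AnalyticAt ℝ (specProj n k f) z := by
  intro z
  rw [funext (specProj_eq_sum k hf)]
  refine Finset.analyticAt_fun_sum _ fun j _ => Finset.analyticAt_fun_sum _ fun a _ =>
    Finset.analyticAt_fun_sum _ fun b _ => AnalyticAt.mul ?_ ?_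
  · have hnormSq := analyticAt_norm_sq z
    have hradial : AnalyticAt ℝ (fun z : EuclideanSpace ℂ (Fin n) =>
        laguerreCoeff k (n - 1) j a b * (-(‖z‖ ^ 2 / 2)) ^ a * Real.exp (-‖z‖ ^ 2 / 4)) z := by
      fun_prop
    exact (ofRealCLM.analyticAt _).comp hradial
  · exact analyticAt_integral_mul_pow_mul_exp (hasExpMoments_laguerreWeight hf _)
      continuous_reInnerCLM.aestronglyMeasurable continuous_halfInnerCLM.aestronglyMeasurable
      norm_reInnerCLM_le norm_halfInnerCLM_le b z

/-- The spectral projection `z ↦ f × φ_k^{n-1}(z)` of an `L²` function is real analytic. -/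
theorem specProj_analytic
    (n k : ℕ) (hn : 1 ≤ n) (f : EuclideanSpace ℂ (Fin n) → ℂ) (hf : MemLp f 2 volume) :
    ∀ z : EuclideanSpace ℂ (Fin n), AnalyticAt ℝ (specProj n k f) z :=
  specProj_analytic_general n k f hf
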